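/- Let F be a finite field of odd order q, z ∈ F a non-square with 1-z a non-square, Δ = diag(1,-z), ν ≥ 1, and S = [[0, I_ν, 0],[I_ν, 0, 0],[0, 0, Δ]] the Gram matrix of the (2ν+2)-dimensional orthogonal space. Then the set Λ of maximal totally isotropic subspaces P of F^{2ν+2} (dim P = ν, P·S·Pᵗ = 0) with P ∩ (I_ν | 0 | 0) = 0 is in bijection with pairs (X, Z) where X is a ν×ν alternate matrix and Z ∈ M_{ν×2}(F), via (X, Z) ↦ row space of (X - (1/2)·Z·Δ·Zᵗ | I_ν | Z). In particular |Λ| = q^{ν(ν+3)/2}. -/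

import Mathlib

open Matrix

-- Gram matrix [[0, I_ν, 0], [I_ν, 0, 0], [0, 0, diag(1,-z)]] on F^ν ⊕ F^ν ⊕ F².
def gramS (F : Type*) [Field F] (ν : ℕ) (z : F) :
    Matrix (Fin ν ⊕ (Fin ν ⊕ Fin 2)) (Fin ν ⊕ (Fin ν ⊕ Fin 2)) F := fun i j =>
  match i, j with
  | .inl a, .inr (.inl b) => if a = b then 1 else 0
  | .inr (.inl a), .inl b => if a = b then 1 else 0
  | .inr (.inr a), .inr (.inr b) => !![(1 : F), 0; 0, -z] a b
  | _, _ => 0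

-- The i-th row of the matrix (X - (1/2)·Z·Δ·Zᵗ | I_ν | Z).
def lambdaRow {F : Type*} [Field F] {ν : ℕ} (z : F)
    (X : Matrix (Fin ν) (Fin ν) F) (Z : Matrix (Fin ν) (Fin 2) F) (i : Fin ν) :
    (Fin ν ⊕ (Fin ν ⊕ Fin 2)) → F := fun j =>
  match j with
  | .inl j' => (X - (2 : F)⁻¹ • (Z * !![(1 : F), 0; 0, -z] * Zᵀ)) i j'
  | .inr (.inl j') => if i = j' then 1 else 0
  | .inr (.inr j') => Z i j'

lemma aniso {F : Type*} [Field F] {z : F} (hz : ¬ IsSquare z) {a b : F}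
    (h : a * a - z * (b * b) = 0) : a = 0 ∧ b = 0 := by
  by_cases hb : b = 0
  · subst hb
    simp only [mul_zero, sub_zero] at h
    exact ⟨mul_self_eq_zero.mp h, rfl⟩
  · exact absurd ⟨a / b, by field_simp; linear_combination -h⟩ hz


section
variable {F : Type*} [Field F] {ν : ℕ} {z : F}

lemma gram_form (u v : (Fin ν ⊕ (Fin ν ⊕ Fin 2)) → F) :
    u ⬝ᵥ (gramS F ν z).mulVec v =
      (∑ i, u (.inl i) * v (.inr (.inl i))) + (∑ i, u (.inr (.inl i)) * v (.inl i))
      + (u (.inr (.inr 0)) * v (.inr (.inr 0)) - z * (u (.inr (.inr 1)) * v (.inr (.inr 1)))) := by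
  simp only [dotProduct, mulVec, Fintype.sum_sum_type, gramS, Fin.sum_univ_two]
  simp [dotProduct, Fintype.sum_sum_type, Finset.mul_sum, mul_ite, ite_mul, Matrix.cons_val_zero,
    Matrix.cons_val_one, Fin.sum_univ_two]
  ring

-- the i-th entry used for W = Z Δ Zᵀ
lemma W_apply (Z : Matrix (Fin ν) (Fin 2) F) (i j : Fin ν) :
    (Z * !![(1 : F), 0; 0, -z] * Zᵀ) i j = Z i 0 * Z j 0 - z * (Z i 1 * Z j 1) := by
  simp [Matrix.mul_apply, Fin.sum_univ_two]
  ring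

lemma sum_rows_apply_mid (X : Matrix (Fin ν) (Fin ν) F) (Z : Matrix (Fin ν) (Fin 2) F)
    (c : Fin ν → F) (j : Fin ν) :
    (∑ i, c i • lambdaRow z X Z i) (.inr (.inl j)) = c j := by
  simp [lambdaRow, Finset.sum_apply, mul_ite]

lemma rows_li (X : Matrix (Fin ν) (Fin ν) F) (Z : Matrix (Fin ν) (Fin 2) F) :
    LinearIndependent F (lambdaRow z X Z) := by
  rw [Fintype.linearIndependent_iff]
  intro c hc j
  have := congrFun hc (.inr (.inl j))
  rwa [sum_rows_apply_mid] at this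

lemma rows_isotropic (h2 : (2 : F) ≠ 0) (X : Matrix (Fin ν) (Fin ν) F)
    (Z : Matrix (Fin ν) (Fin 2) F) (hX : Xᵀ = -X) (i j : Fin ν) :
    lambdaRow z X Z i ⬝ᵥ (gramS F ν z).mulVec (lambdaRow z X Z j) = 0 := by
  have hXji : X j i = - X i j := by
    have := congrFun (congrFun hX i) j
    simpa using this
  rw [gram_form]
  simp only [lambdaRow, Matrix.sub_apply, Matrix.smul_apply, smul_eq_mul, W_apply,
    mul_ite, ite_mul, mul_one, one_mul, mul_zero, zero_mul, Finset.sum_ite_eq,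
    Finset.sum_ite_eq', Finset.mem_univ, if_true]
  rw [hXji]
  field_simp
  ring

-- bilinear vanishing on spans
lemma span_isotropic {ι κ : Type*} [Fintype ι] [DecidableEq ι] (M : Matrix ι ι F)
    (r : κ → ι → F) (h : ∀ i j, r i ⬝ᵥ M.mulVec (r j) = 0) :
    ∀ u ∈ Submodule.span F (Set.range r), ∀ v ∈ Submodule.span F (Set.range r),
      u ⬝ᵥ M.mulVec v = 0 := by
  set Bl : (ι → F) →ₗ[F] (ι → F) →ₗ[F] F :=
    LinearMap.mk₂ F (fun u v => u ⬝ᵥ M.mulVec v)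
      (fun u u' v => by simp [add_dotProduct])
      (fun a u v => by simp [smul_dotProduct])
      (fun u v v' => by simp [mulVec_add, dotProduct_add])
      (fun a u v => by simp [mulVec_smul, dotProduct_smul]) with hBl
  have h1 : ∀ i, Submodule.span F (Set.range r) ≤ LinearMap.ker (Bl (r i)) := fun i =>
    Submodule.span_le.2 (by rintro _ ⟨j, rfl⟩; exact h i j)
  intro u hu v hv
  have h2 : Submodule.span F (Set.range r) ≤ LinearMap.ker (Bl.flip v) :=
    Submodule.span_le.2 (by rintro _ ⟨i, rfl⟩; exact h1 i hv)
  exact h2 hu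

lemma mem_P0 (v : (Fin ν ⊕ (Fin ν ⊕ Fin 2)) → F) (hv : ∀ j, v (.inr j) = 0) :
    v ∈ Submodule.span F
      (Set.range fun i : Fin ν => (Pi.single (Sum.inl i) 1 : (Fin ν ⊕ (Fin ν ⊕ Fin 2)) → F)) := by
  have hvs : v = ∑ i, v (.inl i) • (Pi.single (Sum.inl i) 1 : (Fin ν ⊕ (Fin ν ⊕ Fin 2)) → F) := by
    funext j
    rcases j with a | b
    · simp [Finset.sum_apply, Pi.single_apply]
    · simp [Finset.sum_apply, Pi.single_apply, hv]
  rw [hvs]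
  exact Submodule.sum_mem _ fun i _ =>
    Submodule.smul_mem _ _ (Submodule.subset_span ⟨i, rfl⟩)

lemma P0_vanish (v : (Fin ν ⊕ (Fin ν ⊕ Fin 2)) → F)
    (hv : v ∈ Submodule.span F
      (Set.range fun i : Fin ν => (Pi.single (Sum.inl i) 1 : (Fin ν ⊕ (Fin ν ⊕ Fin 2)) → F)))
    (j : Fin ν ⊕ Fin 2) : v (.inr j) = 0 := by
  induction hv using Submodule.span_induction with
  | mem x hx => obtain ⟨i, rfl⟩ := hx; simp [Pi.single_apply]
  | zero => simp
  | add x y _ _ hx hy => simp [hx, hy]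
  | smul a x _ hx => simp [hx]

end

def ltPairsEquiv (ν : ℕ) : {p : Fin ν × Fin ν // p.1 < p.2} ≃ (Σ j : Fin ν, Fin j) where
  toFun p := ⟨p.1.2, ⟨p.1.1, p.2⟩⟩
  invFun s := ⟨(⟨s.2.1, lt_trans s.2.2 s.1.2⟩, s.1), s.2.2⟩
  left_inv p := rfl
  right_inv s := rfl

def altEquiv (F : Type*) [Field F] (ν : ℕ) :
    {X : Matrix (Fin ν) (Fin ν) F // Xᵀ = -X ∧ ∀ i, X i i = 0} ≃
      ({p : Fin ν × Fin ν // p.1 < p.2} → F) where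
  toFun X q := X.1 q.1.1 q.1.2
  invFun g := ⟨Matrix.of fun i j =>
      if h : i < j then g ⟨(i, j), h⟩ else if h' : j < i then -g ⟨(j, i), h'⟩ else 0, by
    constructor
    · ext i j
      rcases lt_trichotomy i j with h | h | h
      · simp [Matrix.of_apply, h, not_lt.2 h.le, asymm h]
      · subst h; simp [lt_irrefl]
      · simp [Matrix.of_apply, h, not_lt.2 h.le, asymm h]
    · intro i; simp [lt_irrefl]⟩
  left_inv X := by
    apply Subtype.ext
    ext i j
    have halt : X.1 j i = -X.1 i j := by
      have := congrFun (congrFun X.2.1 i) j; simpa using this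
    rcases lt_trichotomy i j with h | h | h
    · simp [Matrix.of_apply, h]
    · subst h; simp [lt_irrefl, X.2.2 i]
    · simp [Matrix.of_apply, h, not_lt.2 h.le, asymm h, halt]
  right_inv g := by
    funext q
    simp [Matrix.of_apply, q.2]

lemma card_lt_pairs (ν : ℕ) :
    Fintype.card {p : Fin ν × Fin ν // p.1 < p.2} = ν * (ν - 1) / 2 := by
  rw [Fintype.card_congr (ltPairsEquiv ν), Fintype.card_sigma]
  simp only [Fintype.card_fin]
  rw [Fin.sum_univ_eq_sum_range (fun i => i) ν, Finset.sum_range_id]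

lemma card_alt (F : Type*) [Field F] [Fintype F] (ν : ℕ) [DecidableEq F] :
    Nat.card {X : Matrix (Fin ν) (Fin ν) F // Xᵀ = -X ∧ ∀ i, X i i = 0} =
      Fintype.card F ^ (ν * (ν - 1) / 2) := by
  rw [Nat.card_congr (altEquiv F ν), Nat.card_eq_fintype_card, Fintype.card_fun, card_lt_pairs]

def subProdEquiv {A B : Type*} (pred : A → Prop) :
    {p : A × B // pred p.1} ≃ {a : A // pred a} × B where
  toFun p := (⟨p.1.1, p.2⟩, p.1.2)
  invFun x := ⟨(x.1.1, x.2), x.1.2⟩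
  left_inv p := rfl
  right_inv x := rfl

lemma exp_arith (ν : ℕ) (hν : 1 ≤ ν) : ν * (ν - 1) / 2 + 2 * ν = ν * (ν + 3) / 2 := by
  obtain ⟨k, rfl⟩ : ∃ k, ν = 1 + k := ⟨ν - 1, by omega⟩
  have e1 : (1 + k) * (1 + k - 1) = k * (k + 1) := by
    simp
    ring
  have e2 : (1 + k) * (1 + k + 3) = k * (k + 1) + 4 * (k + 1) := by ring
  obtain ⟨m, hm⟩ := Nat.even_mul_succ_self k
  rw [e1, e2, hm]
  omega


theorem stmt_10 (F : Type*) [Field F] [Fintype F] (q : ℕ)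
    (hq : Fintype.card F = q) (hodd : Odd q) (z : F) (hz : ¬ IsSquare z)
    (hz1 : ¬ IsSquare (1 - z)) (ν : ℕ) (hν : 1 ≤ ν)
    -- the distinguished maximal totally isotropic subspace (I_ν | 0 | 0)
    (P₀ : Submodule F ((Fin ν ⊕ (Fin ν ⊕ Fin 2)) → F))
    (hP₀ : P₀ = Submodule.span F
      (Set.range fun i : Fin ν => (Pi.single (Sum.inl i) 1 : (Fin ν ⊕ (Fin ν ⊕ Fin 2)) → F)))
    -- the last subconstituent Λ
    (Λ : Set (Submodule F ((Fin ν ⊕ (Fin ν ⊕ Fin 2)) → F)))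
    (hΛ : Λ = {P : Submodule F ((Fin ν ⊕ (Fin ν ⊕ Fin 2)) → F) | Module.finrank F (↥P) = ν ∧
      (∀ u ∈ P, ∀ v ∈ P, u ⬝ᵥ (gramS F ν z).mulVec v = 0) ∧ P ⊓ P₀ = ⊥})
    -- the parametrization map
    (f : {p : Matrix (Fin ν) (Fin ν) F × Matrix (Fin ν) (Fin 2) F //
        p.1ᵀ = -p.1 ∧ ∀ i, p.1 i i = 0} → Submodule F ((Fin ν ⊕ (Fin ν ⊕ Fin 2)) → F))
    (hf : ∀ p, f p = Submodule.span F (Set.range (lambdaRow z p.val.1 p.val.2))) :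
    Set.range f = Λ ∧ Function.Injective f ∧ Nat.card Λ = q ^ (ν * (ν + 3) / 2) := by
  classical
  have hq2 : q % 2 = 1 := Nat.odd_iff.mp hodd
  have hchar : ringChar F ≠ 2 := by
    rw [Ne, FiniteField.even_card_iff_char_two, hq]
    omega
  have h2 : (2 : F) ≠ 0 := Ring.two_ne_zero hchar
  -- Part A : range f ⊆ Λ
  have hmem : ∀ p, f p ∈ Λ := by
    rintro ⟨⟨X, Z⟩, hXalt, hXdiag⟩
    rw [hΛ, Set.mem_setOf_eq, hf]
    refine ⟨?_, ?_, ?_⟩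
    · rw [finrank_span_eq_card (rows_li (z := z) X Z), Fintype.card_fin]
    · exact span_isotropic _ _ (rows_isotropic h2 X Z hXalt)
    · rw [eq_bot_iff]
      intro v hv
      obtain ⟨hv1, hv2⟩ := Submodule.mem_inf.mp hv
      obtain ⟨c, hc⟩ := (Submodule.mem_span_range_iff_exists_fun F).mp hv1
      rw [hP₀] at hv2
      have hc0 : ∀ j, c j = 0 := by
        intro j
        have h0 := P0_vanish v hv2 (.inl j)
        rw [← hc, sum_rows_apply_mid] at h0
        exact h0
      rw [Submodule.mem_bot, ← hc]
      simp [hc0]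
  -- Part B : Λ ⊆ range f
  have hsurj : ∀ P ∈ Λ, ∃ p, f p = P := by
    intro P hP
    rw [hΛ, Set.mem_setOf_eq] at hP
    obtain ⟨hrank, hiso, hint⟩ := hP
    set π : ((Fin ν ⊕ (Fin ν ⊕ Fin 2)) → F) →ₗ[F] (Fin ν → F) :=
      LinearMap.funLeft F F (fun i => Sum.inr (Sum.inl i)) with hπ
    have key : ∀ w ∈ P, (∀ j : Fin ν, w (.inr (.inl j)) = 0) → w = 0 := by
      intro w hw hwm
      have hq0 := hiso w hw w hw
      rw [gram_form] at hq0
      simp only [hwm, mul_zero, zero_mul, Finset.sum_const_zero, zero_add, add_zero] at hq0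
      obtain ⟨h0, h1⟩ := aniso hz hq0
      have hw0 : w ∈ P₀ := by
        rw [hP₀]
        apply mem_P0
        rintro (j | j)
        · exact hwm j
        · fin_cases j
          · exact h0
          · exact h1
      have : w ∈ P ⊓ P₀ := Submodule.mem_inf.mpr ⟨hw, hw0⟩
      rw [hint, Submodule.mem_bot] at this
      exact this
    have hinj : Function.Injective (π.comp P.subtype) := by
      intro a b hab
      apply Subtype.ext
      have hsub : (a : (Fin ν ⊕ (Fin ν ⊕ Fin 2)) → F) - b = 0 := by
        apply key _ (P.sub_mem a.2 b.2)
        intro j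
        have := congrFun hab j
        simp only [hπ, LinearMap.comp_apply, Submodule.coe_subtype,
          LinearMap.funLeft_apply] at this
        simp [this]
      exact sub_eq_zero.mp hsub
    have hsurjπ : Function.Surjective (π.comp P.subtype) := by
      have hdim : Module.finrank F P = Module.finrank F (Fin ν → F) := by
        rw [hrank, Module.finrank_pi, Fintype.card_fin]
      exact (LinearMap.injective_iff_surjective_of_finrank_eq_finrank hdim).mp hinj
    choose r hr using fun i => hsurjπ (Pi.single i 1)
    have hrmid : ∀ i j, (r i : (Fin ν ⊕ (Fin ν ⊕ Fin 2)) → F) (.inr (.inl j))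
        = if i = j then 1 else 0 := by
      intro i j
      have := congrFun (hr i) j
      simp only [hπ, LinearMap.comp_apply, Submodule.coe_subtype,
        LinearMap.funLeft_apply] at this
      rw [this, Pi.single_apply]
      exact if_congr eq_comm rfl rfl
    set Y : Matrix (Fin ν) (Fin ν) F :=
      Matrix.of fun i j => (r i : (Fin ν ⊕ (Fin ν ⊕ Fin 2)) → F) (Sum.inl j) with hY
    set Z : Matrix (Fin ν) (Fin 2) F :=
      Matrix.of fun i j => (r i : (Fin ν ⊕ (Fin ν ⊕ Fin 2)) → F) (Sum.inr (Sum.inr j)) with hZ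
    set W := Z * !![(1 : F), 0; 0, -z] * Zᵀ with hW
    have hrel : ∀ i j, Y i j + Y j i + W i j = 0 := by
      intro i j
      have h0 := hiso _ (r i).2 _ (r j).2
      rw [gram_form] at h0
      simp only [hrmid, mul_ite, ite_mul, mul_one, one_mul, mul_zero, zero_mul,
        Finset.sum_ite_eq, Finset.sum_ite_eq', Finset.mem_univ, if_true] at h0
      rw [hW, W_apply]
      simp only [hY, hZ, Matrix.of_apply]
      linear_combination h0
    have hWsym : ∀ i j, W i j = W j i := by
      intro i j
      rw [hW, W_apply, W_apply]
      ring
    set X : Matrix (Fin ν) (Fin ν) F := Y + (2 : F)⁻¹ • W with hX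
    have hXalt : Xᵀ = -X := by
      ext i j
      simp only [transpose_apply, Matrix.neg_apply, hX, Matrix.add_apply, Matrix.smul_apply,
        smul_eq_mul]
      have e1 := hrel i j
      have e2 := hWsym i j
      field_simp
      linear_combination 2 * e1 - e2
    have hXdiag : ∀ i, X i i = 0 := by
      intro i
      simp only [hX, Matrix.add_apply, Matrix.smul_apply, smul_eq_mul]
      have e1 := hrel i i
      field_simp
      linear_combination e1
    refine ⟨⟨(X, Z), hXalt, hXdiag⟩, ?_⟩
    rw [hf]
    have hrow : lambdaRow z X Z = fun i => ((r i : (Fin ν ⊕ (Fin ν ⊕ Fin 2)) → F)) := by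
      funext i j
      rcases j with j | j | j
      · show (X - (2 : F)⁻¹ • W) i j = _
        simp [hX, hY]
      · rw [show lambdaRow z X Z i (.inr (.inl j)) = if i = j then 1 else 0 from rfl, hrmid]
      · rfl
    rw [hrow]
    have hli : LinearIndependent F (fun i => ((r i : (Fin ν ⊕ (Fin ν ⊕ Fin 2)) → F))) := by
      rw [← hrow]
      exact rows_li X Z
    apply Submodule.eq_of_le_of_finrank_le
    · exact Submodule.span_le.2 (by rintro _ ⟨i, rfl⟩; exact (r i).2)
    · rw [hrank, finrank_span_eq_card hli, Fintype.card_fin]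
  have hrange : Set.range f = Λ := by
    apply Set.eq_of_subset_of_subset
    · rintro _ ⟨p, rfl⟩; exact hmem p
    · intro P hP
      obtain ⟨p, hp⟩ := hsurj P hP
      exact ⟨p, hp⟩
  -- injectivity
  have hinjf : Function.Injective f := by
    rintro ⟨⟨X, Z⟩, hp⟩ ⟨⟨X', Z'⟩, hp'⟩ hff
    have hspan : Submodule.span F (Set.range (lambdaRow z X Z)) =
        Submodule.span F (Set.range (lambdaRow z X' Z')) := by
      have h1 := hf ⟨(X, Z), hp⟩
      exact (h1.symm.trans hff).trans (hf ⟨(X', Z'), hp'⟩)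
    have hrows : ∀ i, lambdaRow z X Z i = lambdaRow z X' Z' i := by
      intro i
      have hm : lambdaRow z X Z i ∈ Submodule.span F (Set.range (lambdaRow z X' Z')) := by
        rw [← hspan]
        exact Submodule.subset_span ⟨i, rfl⟩
      obtain ⟨c, hc⟩ := (Submodule.mem_span_range_iff_exists_fun F).mp hm
      have hcd : ∀ j, c j = if i = j then 1 else 0 := by
        intro j
        have := congrFun hc (.inr (.inl j))
        rw [sum_rows_apply_mid] at this
        exact this
      rw [← hc]
      have : ∀ j, c j • lambdaRow z X' Z' j
          = (if i = j then (1 : F) else 0) • lambdaRow z X' Z' j := by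
        intro j; rw [hcd]
      rw [Finset.sum_congr rfl fun j _ => this j]
      simp
    have hZeq : Z = Z' := by
      ext i j
      exact congrFun (hrows i) (.inr (.inr j))
    have hXeq : X = X' := by
      ext i j
      have := congrFun (hrows i) (.inl j)
      simp only [lambdaRow] at this
      rw [hZeq] at this
      have h' : X i j - ((2:F)⁻¹ • (Z' * !![(1 : F), 0; 0, -z] * Z'ᵀ)) i j
          = X' i j - ((2:F)⁻¹ • (Z' * !![(1 : F), 0; 0, -z] * Z'ᵀ)) i j := by
        simpa [Matrix.sub_apply] using this
      linear_combination h'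
    cases hXeq; cases hZeq; rfl
  refine ⟨hrange, hinjf, ?_⟩
  -- counting
  have e0 : Nat.card
      {p : Matrix (Fin ν) (Fin ν) F × Matrix (Fin ν) (Fin 2) F //
        p.1ᵀ = -p.1 ∧ ∀ i, p.1 i i = 0} =
      Nat.card ({X : Matrix (Fin ν) (Fin ν) F // Xᵀ = -X ∧ ∀ i, X i i = 0}
        × Matrix (Fin ν) (Fin 2) F) :=
    Nat.card_congr (subProdEquiv (fun X : Matrix (Fin ν) (Fin ν) F => Xᵀ = -X ∧ ∀ i, X i i = 0))
  have ecard : Fintype.card (Matrix (Fin ν) (Fin 2) F) = q ^ (2 * ν) := by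
    have h' : Fintype.card (Matrix (Fin ν) (Fin 2) F)
        = Fintype.card (Fin ν → Fin 2 → F) := rfl
    rw [h', Fintype.card_fun, Fintype.card_fun, hq, Fintype.card_fin, Fintype.card_fin,
      ← pow_mul, mul_comm]
  rw [← hrange, Nat.card_range_of_injective hinjf, e0, Nat.card_prod, card_alt, hq,
    Nat.card_eq_fintype_card, ecard, ← pow_add]
  rw [exp_arith ν hν]
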